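/- Let D be the trapezoid with vertices (0,0), (1,0), (0,1), (1,2). There exist no real weights w₁,…,w₅ such that L(f) = w₁f(5/9,7/9) + w₂f(0,0) + w₃f(1,0) + w₄f(0,1) + w₅f(1,2) equals ∫∫_D f dA for all polynomials f(x,y) of total degree ≤ 2. -/
import Mathlib


open MeasureTheory MvPolynomial

/-- The trapezoid with vertices (0,0), (1,0), (0,1), (1,2). -/
def Trap : Set (Fin 2 → ℝ) := {v | 0 ≤ v 0 ∧ v 0 ≤ 1 ∧ 0 ≤ v 1 ∧ v 1 ≤ v 0 + 1}

/-- Auxiliary: the counterexample function on `ℝ × ℝ`. -/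
noncomputable def gAux : ℝ × ℝ → ℝ :=
  fun z => -49*z.1 + 20*z.2 + 49*z.1^2 + 20*z.1*z.2 - 20*z.2^2

/-- Auxiliary: the trapezoid as a subset of `ℝ × ℝ`. -/
def TrapAux : Set (ℝ × ℝ) := {z | 0 ≤ z.1 ∧ z.1 ≤ 1 ∧ 0 ≤ z.2 ∧ z.2 ≤ z.1 + 1}

lemma gAux_cont : Continuous gAux := by unfold gAux; continuity

lemma TrapAux_meas : MeasurableSet TrapAux := by
  have : TrapAux = {z : ℝ×ℝ | 0 ≤ z.1} ∩ {z | z.1 ≤ 1} ∩ {z | 0 ≤ z.2} ∩ {z | z.2 ≤ z.1 + 1} := by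
    ext z; simp [TrapAux]; tauto
  rw [this]
  exact (((measurableSet_le measurable_const measurable_fst).inter
    (measurableSet_le measurable_fst measurable_const)).inter
    (measurableSet_le measurable_const measurable_snd)).inter
    (measurableSet_le measurable_snd (measurable_fst.add_const 1))

lemma trap_step1 : (∫ v in Trap, gAux (v 0, v 1)) = ∫ z in TrapAux, gAux z := by
  have h := (volume_preserving_finTwoArrow ℝ).setIntegral_preimage_emb
    (MeasurableEquiv.measurableEmbedding _) gAux TrapAux
  have hTrap : Trap = MeasurableEquiv.finTwoArrow ⁻¹' TrapAux := by
    ext v; simp [Trap, TrapAux, MeasurableEquiv.finTwoArrow]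
  rw [hTrap, ← h]
  rfl

lemma trap_inner (x : ℝ) (hx : x ∈ Set.Icc (0:ℝ) 1) :
    (∫ y in Set.Icc (0:ℝ) 2, TrapAux.indicator gAux (x, y))
      = 10/3 - 39*x + 10*x^2 + 157/3*x^3 := by
  obtain ⟨hx0, hx1⟩ := hx
  have h1 : (fun y => TrapAux.indicator gAux (x, y))
      = (Set.Icc (0:ℝ) (x+1)).indicator (fun y => gAux (x, y)) := by
    funext y
    by_cases h : y ∈ Set.Icc (0:ℝ) (x+1)
    · rw [Set.indicator_of_mem h, Set.indicator_of_mem]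
      exact ⟨hx0, hx1, h.1, h.2⟩
    · rw [Set.indicator_of_notMem h, Set.indicator_of_notMem]
      intro hc; exact h ⟨hc.2.2.1, hc.2.2.2⟩
  rw [h1, setIntegral_indicator measurableSet_Icc]
  have h2 : Set.Icc (0:ℝ) 2 ∩ Set.Icc (0:ℝ) (x+1) = Set.Icc (0:ℝ) (x+1) :=
    Set.inter_eq_right.mpr (Set.Icc_subset_Icc le_rfl (by linarith))
  rw [h2, integral_Icc_eq_integral_Ioc, ← intervalIntegral.integral_of_le (by linarith)]
  have h : ∀ y ∈ Set.uIcc (0:ℝ) (x+1), HasDerivAt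
      (fun y : ℝ => (-49*x+49*x^2)*y + (10+10*x)*y^2 - 20/3*y^3) (gAux (x, y)) y := by
    intro y _
    have : HasDerivAt (fun y : ℝ => (-49*x+49*x^2)*y + (10+10*x)*y^2 - 20/3*y^3)
        ((-49*x+49*x^2)*1 + (10+10*x)*(2*y^1) - 20/3*(3*y^2)) y :=
      (((hasDerivAt_id y).const_mul _).add ((hasDerivAt_pow 2 y).const_mul _)).sub
        ((hasDerivAt_pow 3 y).const_mul _)
    convert this using 1; simp [gAux]; ring
  rw [intervalIntegral.integral_eq_sub_of_hasDerivAt h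
    ((gAux_cont.comp (by continuity)).intervalIntegrable _ _)]
  ring

lemma trap_step2 : (∫ z in TrapAux, gAux z) = 1/4 := by
  have hsub : TrapAux ⊆ Set.Icc (0:ℝ) 1 ×ˢ Set.Icc (0:ℝ) 2 := by
    rintro ⟨zx, zy⟩ ⟨h1, h2, h3, h4⟩
    exact ⟨⟨h1, h2⟩, ⟨h3, by dsimp at *; linarith⟩⟩
  have e1 : (∫ z in TrapAux, gAux z)
      = ∫ z in Set.Icc (0:ℝ) 1 ×ˢ Set.Icc (0:ℝ) 2, TrapAux.indicator gAux z := by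
    rw [setIntegral_indicator TrapAux_meas, Set.inter_eq_right.mpr hsub]
  rw [e1, Measure.volume_eq_prod]
  have hint : IntegrableOn (TrapAux.indicator gAux)
      (Set.Icc (0:ℝ) 1 ×ˢ Set.Icc (0:ℝ) 2) (volume.prod volume) := by
    rw [← Measure.volume_eq_prod]
    exact (gAux_cont.continuousOn.integrableOn_compact
      (isCompact_Icc.prod isCompact_Icc)).indicator TrapAux_meas
  rw [setIntegral_prod _ hint]
  rw [setIntegral_congr_fun measurableSet_Icc (fun x hx => trap_inner x hx)]
  rw [integral_Icc_eq_integral_Ioc, ← intervalIntegral.integral_of_le (by norm_num : (0:ℝ) ≤ 1)]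
  have h : ∀ x ∈ Set.uIcc (0:ℝ) 1, HasDerivAt
      (fun x : ℝ => 10/3*x - 39/2*x^2 + 10/3*x^3 + 157/12*x^4)
      (10/3 - 39*x + 10*x^2 + 157/3*x^3) x := by
    intro x _
    have : HasDerivAt (fun x : ℝ => 10/3*x - 39/2*x^2 + 10/3*x^3 + 157/12*x^4)
        (10/3*1 - 39/2*(2*x^1) + 10/3*(3*x^2) + 157/12*(4*x^3)) x :=
      ((((hasDerivAt_id x).const_mul _).sub ((hasDerivAt_pow 2 x).const_mul _)).add
        ((hasDerivAt_pow 3 x).const_mul _)).add ((hasDerivAt_pow 4 x).const_mul _)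
    convert this using 1; ring
  rw [intervalIntegral.integral_eq_sub_of_hasDerivAt h
    (by apply Continuous.intervalIntegrable; continuity)]
  norm_num

/-- The counterexample polynomial: vanishes at all five nodes but has integral 1/4. -/
noncomputable def pAux : MvPolynomial (Fin 2) ℝ :=
  C (-49) * X 0 + C 20 * X 1 + C 49 * X 0 ^ 2 + C 20 * (X 0 * X 1) + C (-20) * X 1 ^ 2

lemma pAux_deg : pAux.totalDegree ≤ 2 := by
  have hCmul : ∀ (a : ℝ) (q : MvPolynomial (Fin 2) ℝ),
      (C a * q).totalDegree ≤ q.totalDegree := fun a q =>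
    (totalDegree_mul _ _).trans (by simp [totalDegree_C])
  have hX : (X 0 * X 1 : MvPolynomial (Fin 2) ℝ).totalDegree ≤ 2 :=
    (totalDegree_mul _ _).trans (by rw [totalDegree_X, totalDegree_X])
  refine (totalDegree_add _ _).trans (max_le ((totalDegree_add _ _).trans (max_le
    ((totalDegree_add _ _).trans (max_le ((totalDegree_add _ _).trans (max_le ?_ ?_)) ?_)) ?_)) ?_)
  · exact (hCmul _ _).trans (by rw [totalDegree_X]; norm_num)
  · exact (hCmul _ _).trans (by rw [totalDegree_X]; norm_num)
  · exact (hCmul _ _).trans (by rw [totalDegree_X_pow])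
  · exact (hCmul _ _).trans hX
  · exact (hCmul _ _).trans (by rw [totalDegree_X_pow])

lemma pAux_eval (v : Fin 2 → ℝ) : eval v pAux = gAux (v 0, v 1) := by
  simp [pAux, gAux]
  ring

theorem stmt_16 :
    ¬ ∃ w₁ w₂ w₃ w₄ w₅ : ℝ, ∀ p : MvPolynomial (Fin 2) ℝ, p.totalDegree ≤ 2 →
      w₁ * eval ![5/9, 7/9] p + w₂ * eval ![0, 0] p + w₃ * eval ![1, 0] p
          + w₄ * eval ![0, 1] p + w₅ * eval ![1, 2] p
        = ∫ v in Trap, eval v p := by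
  rintro ⟨w₁, w₂, w₃, w₄, w₅, h⟩
  have h1 := h pAux pAux_deg
  have hint : (∫ v in Trap, eval v pAux) = 1/4 := by
    calc (∫ v in Trap, eval v pAux) = ∫ v in Trap, gAux (v 0, v 1) := by
          simp_rw [pAux_eval]
      _ = ∫ z in TrapAux, gAux z := trap_step1
      _ = 1/4 := trap_step2
  rw [hint] at h1
  have e1 : eval ![(5:ℝ)/9, 7/9] pAux = 0 := by simp [pAux]; norm_num
  have e2 : eval ![(0:ℝ), 0] pAux = 0 := by simp [pAux]
  have e3 : eval ![(1:ℝ), 0] pAux = 0 := by simp [pAux]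
  have e4 : eval ![(0:ℝ), 1] pAux = 0 := by simp [pAux]
  have e5 : eval ![(1:ℝ), 2] pAux = 0 := by simp [pAux]; norm_num
  rw [e1, e2, e3, e4, e5] at h1
  norm_num at h1
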